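/- Suppose (d_k)_{k≥1} are positive reals and there exist constants C > 0, λ > 1, θ < 1, and an injective map k ↦ (r(k), (s_i(k))) such that d_k^{-1/α} ≤ C·λ^{-r(k)/α}·Π_i θ^{(s_i(k)-1)/α}/(C·ρ_i)^{1/α} with no two k sharing the same data. If a := Σ_{n,s} θ^{s/α}/(C·ρ_n)^{1/α} < 1, then Σ_{k≥1} d_k^{-1/α} ≤ C/((1-a)(1-λ^{-1/α})) < ∞. -/
import Mathlib

open ENNReal

lemma aux_tsum_pi_fin_prod (W : ℕ → ℝ≥0∞) :
    ∀ n : ℕ, ∑' t : Fin n → ℕ, ∏ j, W (t j) = (∑' i, W i) ^ n := by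
  intro n
  induction n with
  | zero =>
    simp only [Finset.univ_eq_empty, Finset.prod_empty, pow_zero]
    exact tsum_eq_single finZeroElim (fun b hb => absurd (Subsingleton.elim _ _) hb)
  | succ n ih =>
    rw [← ((Fin.consEquiv (fun _ : Fin (n+1) => ℕ)).tsum_eq (fun t => ∏ j, W (t j)))]
    have : ∀ p : ℕ × (Fin n → ℕ),
        (fun t => ∏ j, W (t j)) ((Fin.consEquiv (fun _ : Fin (n+1) => ℕ)) p)
          = W p.1 * ∏ j, W (p.2 j) := by
      intro p
      simp [Fin.consEquiv, Fin.prod_univ_succ]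
    simp_rw [this]
    rw [ENNReal.tsum_prod']
    simp_rw [ENNReal.tsum_mul_left]
    rw [ENNReal.tsum_mul_right, ih, pow_succ, mul_comm]

lemma aux_prod_orderEmbOfFin (W : ℕ → ℝ≥0∞) (T : Finset ℕ) :
    ∏ j : Fin T.card, W (T.orderEmbOfFin rfl j) = ∏ i ∈ T, W i := by
  apply Finset.prod_bij (fun (j : Fin T.card) _ => T.orderEmbOfFin rfl j)
  · intro j _; exact Finset.orderEmbOfFin_mem T rfl j
  · intro j _ j' _ h; exact (T.orderEmbOfFin rfl).injective h
  · intro b hb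
    have : b ∈ Set.range (T.orderEmbOfFin rfl) := by
      rw [Finset.range_orderEmbOfFin]; exact hb
    obtain ⟨j, hj⟩ := this
    exact ⟨j, Finset.mem_univ j, hj⟩
  · intro j _; rfl

lemma aux_tsum_finset_prod_le (W : ℕ → ℝ≥0∞) :
    ∑' T : Finset ℕ, ∏ i ∈ T, W i ≤ (1 - ∑' i, W i)⁻¹ := by
  classical
  have key : ∀ (n m : ℕ) (f : Fin n → ℕ) (g : Fin m → ℕ), n = m → HEq f g →
      Set.range f = Set.range g := by
    rintro n m f g rfl hh; rw [eq_of_heq hh]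
  have hΦinj : Function.Injective
      (fun T : Finset ℕ => (⟨T.card, ⇑(T.orderEmbOfFin rfl)⟩ : Σ n : ℕ, Fin n → ℕ)) := by
    intro T T' h
    have h1 : T.card = T'.card := congrArg Sigma.fst h
    have h2 : HEq (⇑(T.orderEmbOfFin rfl)) (⇑(T'.orderEmbOfFin rfl)) :=
      (Sigma.ext_iff.mp h).2
    have hr := key _ _ _ _ h1 h2
    rw [Finset.range_orderEmbOfFin, Finset.range_orderEmbOfFin] at hr
    exact Finset.coe_injective hr
  calc ∑' T : Finset ℕ, ∏ i ∈ T, W i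
      = ∑' T : Finset ℕ, (fun x : Σ n : ℕ, Fin n → ℕ => ∏ j, W (x.2 j))
          (⟨T.card, ⇑(T.orderEmbOfFin rfl)⟩ : Σ n : ℕ, Fin n → ℕ) := by
        simp_rw [aux_prod_orderEmbOfFin]
    _ ≤ ∑' x : Σ n : ℕ, Fin n → ℕ, ∏ j, W (x.2 j) :=
        tsum_comp_le_tsum_of_injective hΦinj _
    _ = ∑' n : ℕ, ∑' t : Fin n → ℕ, ∏ j, W (t j) := ENNReal.tsum_sigma' _
    _ = ∑' n : ℕ, (∑' i, W i) ^ n := by simp_rw [aux_tsum_pi_fin_prod]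
    _ = (1 - ∑' i, W i)⁻¹ := ENNReal.tsum_geometric _

/-- Abstract Telemann decomposition summation: if each `k` is injectively assigned
data `(r k, F k)` with the factors of each product having distinct levels, and
`d_k^{-1/α} ≤ C·λ^{-r(k)/α}·Π_{(n,s) ∈ F k} θ^{s/α}/(C·ρ_n)^{1/α}`, and the total
factor sum `a < 1`, then `Σ_k d_k^{-1/α} ≤ C/((1-a)(1-λ^{-1/α})) < ∞`. -/
theorem telemann_summation (α θ lam C : ℝ) (hα : 1 < α) (hθ : θ ∈ Set.Ioo (0 : ℝ) 1)
    (hlam : 1 < lam) (hC : 0 < C) (ρ : ℕ → ℝ) (hρ : ∀ n, 0 < ρ n)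
    (d : ℕ → ℝ) (hd : ∀ k, 0 < d k)
    (r : ℕ → ℕ) (F : ℕ → Finset (ℕ × ℕ))
    (hinj : Function.Injective fun k => (r k, F k))
    (hfst : ∀ k, Set.InjOn Prod.fst (F k : Set (ℕ × ℕ)))
    (hbound : ∀ k, d k ^ (-(1 / α)) ≤
      C * lam ^ (-((r k : ℝ) / α)) *
        ∏ p ∈ F k, θ ^ ((p.2 : ℝ) / α) / (C * ρ p.1) ^ (1 / α))
    (hasum : Summable fun p : ℕ × ℕ => θ ^ ((p.2 : ℝ) / α) / (C * ρ p.1) ^ (1 / α))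
    (ha : (∑' p : ℕ × ℕ, θ ^ ((p.2 : ℝ) / α) / (C * ρ p.1) ^ (1 / α)) < 1) :
    Summable (fun k => d k ^ (-(1 / α))) ∧
      (∑' k : ℕ, d k ^ (-(1 / α))) ≤
        C / ((1 - ∑' p : ℕ × ℕ, θ ^ ((p.2 : ℝ) / α) / (C * ρ p.1) ^ (1 / α)) *
          (1 - lam ^ (-(1 / α)))) := by
  classical
  obtain ⟨hθ0, hθ1⟩ := hθ
  have hα0 : (0 : ℝ) < α := lt_trans zero_lt_one hα
  have hlam0 : (0 : ℝ) < lam := lt_trans zero_lt_one hlam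
  set w : ℕ × ℕ → ℝ := fun p => θ ^ ((p.2 : ℝ) / α) / (C * ρ p.1) ^ (1 / α) with hw
  have hwnn : ∀ p, 0 ≤ w p := by
    intro p
    apply div_nonneg (Real.rpow_nonneg hθ0.le _)
    exact Real.rpow_nonneg (mul_nonneg hC.le (hρ p.1).le) _
  set a : ℝ := ∑' p : ℕ × ℕ, w p with haa
  have ha0 : 0 ≤ a := tsum_nonneg hwnn
  set q : ℝ := lam ^ (-(1 / α)) with hq
  have hq0 : 0 ≤ q := Real.rpow_nonneg hlam0.le _
  have hq1 : q < 1 :=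
    Real.rpow_lt_one_of_one_lt_of_neg hlam (neg_lt_zero.mpr (by positivity))
  have hqpow : ∀ k : ℕ, lam ^ (-((k : ℝ) / α)) = q ^ k := by
    intro k
    rw [hq, ← Real.rpow_natCast (lam ^ (-(1 / α))) k, ← Real.rpow_mul hlam0.le]
    congr 1; ring
  set f : ℕ → ℝ := fun k => d k ^ (-(1 / α)) with hf
  have hfnn : ∀ k, 0 ≤ f k := fun k => Real.rpow_nonneg (hd k).le _
  -- ENNReal versions
  set V : ℕ × ℕ → ℝ≥0∞ := fun p => ENNReal.ofReal (w p) with hV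
  set e : ℕ × ℕ ≃ ℕ := Denumerable.eqv (ℕ × ℕ) with he
  set W : ℕ → ℝ≥0∞ := fun i => V (e.symm i) with hW
  have hWsum : ∑' i, W i = ENNReal.ofReal a := by
    rw [hW]
    rw [e.symm.tsum_eq V]
    exact (ENNReal.ofReal_tsum_of_nonneg hwnn hasum).symm
  -- pointwise bound in ENNReal
  set G : ℕ × Finset (ℕ × ℕ) → ℝ≥0∞ := fun ms =>
    ENNReal.ofReal C * (ENNReal.ofReal q) ^ ms.1 * ∏ p ∈ ms.2, V p with hG
  have hptwise : ∀ k, ENNReal.ofReal (f k) ≤ G (r k, F k) := by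
    intro k
    refine le_trans (ENNReal.ofReal_le_ofReal (hbound k)) (le_of_eq ?_)
    rw [ENNReal.ofReal_mul (by positivity), ENNReal.ofReal_mul hC.le]
    congr 1
    · congr 1
      rw [hqpow (r k), ENNReal.ofReal_pow hq0]
    · rw [ENNReal.ofReal_prod_of_nonneg (fun p _ => hwnn p)]
  -- sum of G over all data
  have hHle : ∑' S : Finset (ℕ × ℕ), ∏ p ∈ S, V p ≤ (1 - ENNReal.ofReal a)⁻¹ := by
    have hcongr : ∑' S : Finset (ℕ × ℕ), ∏ p ∈ S, V p = ∑' T : Finset ℕ, ∏ i ∈ T, W i := by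
      rw [← (e.symm.finsetCongr).tsum_eq (fun S : Finset (ℕ × ℕ) => ∏ p ∈ S, V p)]
      refine tsum_congr fun T => ?_
      rw [Equiv.finsetCongr_apply, Finset.prod_map]
      rfl
    rw [hcongr, ← hWsum]
    exact aux_tsum_finset_prod_le W
  have hGsum : ∑' ms : ℕ × Finset (ℕ × ℕ), G ms ≤
      ENNReal.ofReal C * (1 - ENNReal.ofReal q)⁻¹ * (1 - ENNReal.ofReal a)⁻¹ := by
    rw [ENNReal.tsum_prod']
    simp_rw [hG, ENNReal.tsum_mul_left]
    rw [ENNReal.tsum_mul_right, ENNReal.tsum_mul_left, ENNReal.tsum_geometric]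
    rw [mul_assoc, mul_assoc]
    exact mul_le_mul_right (mul_le_mul_right hHle _) _
  -- total bound
  have hqlt : (1 : ℝ) - q > 0 := by linarith
  have halt : (1 : ℝ) - a > 0 := by linarith
  set R : ℝ := C * (1 - q)⁻¹ * (1 - a)⁻¹ with hR
  have hRof : ENNReal.ofReal C * (1 - ENNReal.ofReal q)⁻¹ * (1 - ENNReal.ofReal a)⁻¹ =
      ENNReal.ofReal R := by
    rw [hR]
    have h1 : (1 : ℝ≥0∞) - ENNReal.ofReal q = ENNReal.ofReal (1 - q) := by
      rw [ENNReal.ofReal_sub 1 hq0, ENNReal.ofReal_one]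
    have h2 : (1 : ℝ≥0∞) - ENNReal.ofReal a = ENNReal.ofReal (1 - a) := by
      rw [ENNReal.ofReal_sub 1 ha0, ENNReal.ofReal_one]
    rw [h1, h2, ← ENNReal.ofReal_inv_of_pos hqlt, ← ENNReal.ofReal_inv_of_pos halt,
      ← ENNReal.ofReal_mul hC.le, ← ENNReal.ofReal_mul (by positivity)]
  have htotal : ∑' k, ENNReal.ofReal (f k) ≤ ENNReal.ofReal R := by
    calc ∑' k, ENNReal.ofReal (f k) ≤ ∑' k, G (r k, F k) := Summable.tsum_le_tsum hptwise
          ENNReal.summable ENNReal.summable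
      _ ≤ ∑' ms : ℕ × Finset (ℕ × ℕ), G ms := tsum_comp_le_tsum_of_injective hinj G
      _ ≤ ENNReal.ofReal C * (1 - ENNReal.ofReal q)⁻¹ * (1 - ENNReal.ofReal a)⁻¹ := hGsum
      _ = ENNReal.ofReal R := hRof
  have hne : ∑' k, ENNReal.ofReal (f k) ≠ ⊤ :=
    ne_top_of_le_ne_top ENNReal.ofReal_ne_top htotal
  have hsumf : Summable f := by
    have := ENNReal.summable_toReal hne
    refine this.congr fun k => ?_
    exact ENNReal.toReal_ofReal (hfnn k)
  constructor
  · exact hsumf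
  · have heq : ∑' k, f k = (∑' k, ENNReal.ofReal (f k)).toReal := by
      rw [ENNReal.tsum_toReal_eq (fun k => ENNReal.ofReal_ne_top)]
      exact tsum_congr fun k => (ENNReal.toReal_ofReal (hfnn k)).symm
    have hle : (∑' k, ENNReal.ofReal (f k)).toReal ≤ R := by
      have := ENNReal.toReal_mono ENNReal.ofReal_ne_top htotal
      rwa [ENNReal.toReal_ofReal (by positivity)] at this
    have hfin : R = C / ((1 - a) * (1 - q)) := by
      rw [hR, div_eq_mul_inv, mul_inv]
      ring
    calc (∑' k : ℕ, f k) ≤ R := heq ▸ hle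
      _ = C / ((1 - a) * (1 - q)) := hfin
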